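/- arXiv:2307.09443 — 7 statements merged into one kernel-verified Lean document; each statement's English description precedes it below -/
import Mathlib

section
/- Let T ≥ 1 and N ≥ 0 be natural numbers, and let v : ℕ → ℕ be an age sequence over horizon T, i.e., v(0) ≥ 1 and for every t, either v(t+1) = 1 (an update slot) or v(t+1) = v(t) + 1. If the number of update slots, i.e., the cardinality of {t : t + 1 ≤ T - 1 and v(t+1) = 1}, is at most N, then the total age satisfies ∑_{t=0}^{T-1} v(t) ≥ (T/2)·(1 + T/(N+1)) (as real numbers). Equivalently, the average age (1/T)∑_{t=0}^{T-1} v(t) is at least (1/2)(1 + T/(N+1)). -/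
/-!
Between two consecutive updates the age grows by one per slot, so a stretch of `L` slots
without an update contributes at least `1 + 2 + ⋯ + L = L (L + 1) / 2`. The `k ≤ N` updates
cut the horizon into `k + 1` such stretches, and by convexity the total is smallest when
they have equal length `T / (N + 1)`. The induction peels off the stretch after the last
update; the convexity step is then the two-term Cauchy–Schwarz (Titu) inequality
`(L + M)² / (n + 1) ≤ L² / n + M²`.
-/

open Finset

/-- Slot `t` is recorded when an update arrives in slot `t + 1 < T`. -/
def updateSlots (v : ℕ → ℕ) (T : ℕ) : Finset ℕ :=
  (range T).filter (fun t => t + 1 ≤ T - 1 ∧ v (t + 1) = 1)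

lemma half_mul_one_add_div_le (T n : ℝ) (hT : 0 ≤ T) (hn : 1 ≤ n) :
    T / 2 * (1 + T / n) ≤ T * (T + 1) / 2 := by
  have : T / n ≤ T := div_le_self hT hn
  nlinarith

lemma half_mul_one_add_div_add_le (L M n : ℝ) (hn : 0 < n) :
    (L + M) / 2 * (1 + (L + M) / (n + 1)) ≤ L / 2 * (1 + L / n) + M * (M + 1) / 2 := by
  rw [← sub_nonneg]
  have key : L / 2 * (1 + L / n) + M * (M + 1) / 2 - (L + M) / 2 * (1 + (L + M) / (n + 1))
      = (L - n * M) ^ 2 / (2 * n * (n + 1)) := by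
    field_simp
    ring
  rw [key]
  positivity

lemma sum_range_cast_add_one (m : ℕ) : ∑ t ∈ range m, ((t : ℝ) + 1) = m * (m + 1) / 2 := by
  induction m with
  | zero => simp
  | succ m ih =>
    rw [sum_range_succ, ih]
    push_cast
    ring

lemma card_updateSlots_succ_lt {v : ℕ → ℕ} {T s : ℕ} (hs : s ∈ updateSlots v T) :
    (updateSlots v (s + 1)).card < (updateSlots v T).card := by
  have hsub : updateSlots v (s + 1) ⊆ (updateSlots v T).erase s := by
    intro t ht
    simp only [updateSlots, mem_filter, mem_range, mem_erase] at hs ht ⊢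
    omega
  exact (card_le_card hsub).trans_lt (card_erase_lt_of_mem hs)

section AgeSequence

variable {v : ℕ → ℕ} (hstep : ∀ t, v (t + 1) = 1 ∨ v (t + 1) = v t + 1)
include hstep

lemma add_le_of_forall_ne_one (a t : ℕ) (hno : ∀ u < t, v (a + u + 1) ≠ 1) :
    v a + t ≤ v (a + t) := by
  induction t with
  | zero => simp
  | succ t ih =>
    have hle := ih fun u hu => hno u (by omega)
    rcases hstep (a + t) with h | h
    · exact absurd h (hno t (by omega))
    · rw [← add_assoc, ← add_assoc, h]
      omega

lemma cast_mul_add_one_div_two_le_sum (a m : ℕ) (ha : 1 ≤ v a)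
    (hno : ∀ u, u + 1 < m → v (a + u + 1) ≠ 1) :
    (m : ℝ) * (m + 1) / 2 ≤ ∑ t ∈ range m, (v (a + t) : ℝ) := by
  rw [← sum_range_cast_add_one]
  refine sum_le_sum fun t ht => ?_
  have hle := add_le_of_forall_ne_one hstep a t fun u hu => hno u (by simp at ht; omega)
  exact_mod_cast (by omega : t + 1 ≤ v (a + t))

lemma sum_ge_of_updateSlots_eq_empty (h0 : 1 ≤ v 0) {T : ℕ} (hT : updateSlots v T = ∅) :
    (T : ℝ) * (T + 1) / 2 ≤ ∑ t ∈ range T, (v t : ℝ) := by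
  have hno : ∀ u, u + 1 < T → v (0 + u + 1) ≠ 1 := fun u hu h1 => by
    have hu : u ∈ updateSlots v T := by
      simp only [updateSlots, mem_filter, mem_range]
      exact ⟨by omega, by omega, by simpa using h1⟩
    simp [hT] at hu
  simpa using cast_mul_add_one_div_two_le_sum hstep 0 T (by simpa using h0) hno

lemma sum_ge_of_card_updateSlots_le (h0 : 1 ≤ v 0) (N : ℕ) :
    ∀ T, (updateSlots v T).card ≤ N →
      (T : ℝ) / 2 * (1 + T / (N + 1)) ≤ ∑ t ∈ range T, (v t : ℝ) := by
  induction N with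
  | zero =>
    intro T hcard
    have hT : updateSlots v T = ∅ := card_eq_zero.mp (Nat.le_zero.mp hcard)
    refine (le_of_eq ?_).trans (sum_ge_of_updateSlots_eq_empty hstep h0 hT)
    push_cast
    ring
  | succ N ih =>
    intro T hcard
    rcases (updateSlots v T).eq_empty_or_nonempty with hT | hne
    · have hN : (1 : ℝ) ≤ (N + 1 : ℕ) + 1 := le_add_of_nonneg_left N.succ.cast_nonneg
      exact (half_mul_one_add_div_le _ _ (by positivity) hN).trans
        (sum_ge_of_updateSlots_eq_empty hstep h0 hT)
    obtain ⟨s, hs, hlast⟩ : ∃ s ∈ updateSlots v T, ∀ t ∈ updateSlots v T, t ≤ s :=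
      ⟨_, max'_mem _ hne, fun t ht => le_max' _ t ht⟩
    obtain ⟨-, hsT, hreset⟩ : s < T ∧ s + 1 ≤ T - 1 ∧ v (s + 1) = 1 := by
      simpa only [updateSlots, mem_filter, mem_range] using hs
    obtain ⟨M, rfl⟩ : ∃ M, T = s + 1 + M := ⟨T - (s + 1), by omega⟩
    have head := ih (s + 1) (by have := card_updateSlots_succ_lt hs; omega)
    have tail := cast_mul_add_one_div_two_le_sum hstep (s + 1) M hreset.ge fun u hu h1 => by
      have hu : s + 1 + u ∈ updateSlots v (s + 1 + M) := by
        simp only [updateSlots, mem_filter, mem_range]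
        exact ⟨by omega, by omega, h1⟩
      have := hlast _ hu
      omega
    rw [sum_range_add]
    push_cast at head ⊢
    calc ((s : ℝ) + 1 + M) / 2 * (1 + ((s : ℝ) + 1 + M) / (N + 1 + 1))
        ≤ ((s : ℝ) + 1) / 2 * (1 + ((s : ℝ) + 1) / (N + 1)) + M * (M + 1) / 2 :=
          half_mul_one_add_div_add_le _ _ _ (by positivity)
      _ ≤ _ := add_le_add head tail

end AgeSequence

theorem stmt_0_general (T N : ℕ) (v : ℕ → ℕ)
    (h0 : 1 ≤ v 0)
    (hstep : ∀ t, v (t + 1) = 1 ∨ v (t + 1) = v t + 1)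
    (hupd : ((Finset.range T).filter (fun t => t + 1 ≤ T - 1 ∧ v (t + 1) = 1)).card ≤ N) :
    ((T : ℝ) / 2) * (1 + (T : ℝ) / ((N : ℝ) + 1)) ≤ ∑ t ∈ Finset.range T, (v t : ℝ) :=
  sum_ge_of_card_updateSlots_le hstep h0 N T hupd

/-- Universal lower bound on the total age of information: any age sequence `v` over
horizon `T` (age resets to `1` at an update slot, otherwise increases by `1`)
with at most `N` update slots has total age at least `(T/2)(1 + T/(N+1))`. -/
theorem stmt_0 (T N : ℕ) (hT : 1 ≤ T) (v : ℕ → ℕ)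
    (h0 : 1 ≤ v 0)
    (hstep : ∀ t, v (t + 1) = 1 ∨ v (t + 1) = v t + 1)
    (hupd : ((Finset.range T).filter (fun t => t + 1 ≤ T - 1 ∧ v (t + 1) = 1)).card ≤ N) :
    ((T : ℝ) / 2) * (1 + (T : ℝ) / ((N : ℝ) + 1)) ≤ ∑ t ∈ Finset.range T, (v t : ℝ) :=
  stmt_0_general T N v h0 hstep hupd
end

section
/- Let T₁, T₂ ≥ 0 and m ≥ 1 be natural numbers and set T = (T₁+1)·m. Define the sawtooth sequence w : ℕ → ℕ by w(t) = (t mod m) + 1, so that ∑_{t=0}^{T-1} w(t) = (T₁+1)·m(m+1)/2 = (T/2)(1 + T/(T₁+1)). Let v : ℕ → ℕ be any age sequence over horizon T (v(0) ≥ 1 and for every t, v(t+1) = 1 or v(t+1) = v(t)+1) whose number of update slots is at most T₁ + T₂. Then (∑_{t=0}^{T-1} w(t)) / (∑_{t=0}^{T-1} v(t)) ≤ ((1 + T₁ + T)/(1 + T₂ + T₁ + T))·(1 + T₂/(T₁+1)). -/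
/-!
The policy's total age is the sawtooth sum `(T₁+1)·m(m+1)/2 = T(m+1)/2`. For the offline age
sequence `v`, slot `t` lies in a block starting at `t + 1 - v t`, which is `0` or one of the at
most `K = T₁ + T₂` resets; so fewer than `c·s` slots (`c = K + 1`) have age `≤ s`. Summing
`#{t | s < v t} ≥ T - c·s` over `s < ⌈T/c⌉` (layer cake) gives `2c·∑ v ≥ T(T + c)`, the value for
equally spaced resets, and the ratio bound is this inequality rearranged.
-/

open Finset

theorem sum_range_mul_comp_mod {M : Type*} [AddCommMonoid M] (f : ℕ → M) (n m : ℕ) :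
    ∑ t ∈ range (n * m), f (t % m) = n • ∑ t ∈ range m, f t := by
  induction n with
  | zero => simp
  | succ n ih =>
    rw [add_mul, one_mul, sum_range_add, ih, succ_nsmul]
    congr 1
    refine sum_congr rfl fun t ht => ?_
    rw [Nat.add_comm, Nat.add_mul_mod_self_right, Nat.mod_eq_of_lt (mem_range.mp ht)]

theorem sum_range_mod_add_one_mul_two (n m : ℕ) :
    (∑ t ∈ range (n * m), (t % m + 1)) * 2 = n * m * (m + 1) := by
  have hshift : ∑ t ∈ range m, (t + 1) = ∑ t ∈ range (m + 1), t := by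
    rw [sum_range_succ', add_zero]
  rw [sum_range_mul_comp_mod (· + 1), smul_eq_mul, mul_assoc, hshift, sum_range_id_mul_two,
    Nat.add_sub_cancel]
  ring

theorem sum_range_card_filter_lt_le_sum {ι : Type*} (s : Finset ι) (f : ι → ℕ) (S : ℕ) :
    ∑ k ∈ range S, #{i ∈ s | k < f i} ≤ ∑ i ∈ s, f i := by
  simp only [card_filter]
  rw [sum_comm]
  refine sum_le_sum fun i _ => ?_
  rw [← card_filter]
  exact (card_le_card fun k hk => by simp only [mem_filter, mem_range] at hk ⊢; exact hk.2).trans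
    (card_range _).le

theorem mul_add_le_two_mul_sum_range_sub (T c : ℕ) (hc : 0 < c) :
    T * (T + c) ≤ 2 * c * ∑ s ∈ range ((T + c - 1) / c), (T - c * s) := by
  have hdiv := Nat.div_add_mod (T + c - 1) c
  have hmod := Nat.mod_lt (T + c - 1) hc
  set S := (T + c - 1) / c
  have hsum : ∑ s ∈ range S, (T - c * s) + c * ∑ s ∈ range S, s = S * T := by
    rw [mul_sum, ← sum_add_distrib, ← card_range S, ← smul_eq_mul, ← sum_const, card_range]
    refine sum_congr rfl fun s hs => Nat.sub_add_cancel ?_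
    have : c * (s + 1) ≤ c * S := Nat.mul_le_mul_left c (mem_range.mp hs)
    rw [mul_add] at this
    omega
  have hgauss := sum_range_id_mul_two S
  rcases Nat.eq_zero_or_pos S with hS | hS
  · have : T = 0 := by rw [hS] at hdiv; omega
    simp [this]
  set A := ∑ s ∈ range S, (T - c * s)
  set G := ∑ s ∈ range S, s
  zify [hS] at hsum hgauss ⊢
  have hA : 2 * c * (A : ℤ) = 2 * c * S * T - c * c * S * (S - 1) := by
    linear_combination (2 * (c : ℤ)) * hsum - (c : ℤ) * c * hgauss
  rw [hA]
  -- with `x = c S - T ∈ [0, c)` the two sides differ by `x (c - x)`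
  nlinarith [mul_nonneg (by omega : (0 : ℤ) ≤ c * S - T) (by omega : (0 : ℤ) ≤ T + c - c * S)]

section AgeSequence

variable {v : ℕ → ℕ}

theorem one_le_age (h0 : 1 ≤ v 0) (hstep : ∀ t, v (t + 1) = 1 ∨ v (t + 1) = v t + 1) (t : ℕ) :
    1 ≤ v t := by
  induction t with
  | zero => exact h0
  | succ t ih => rcases hstep t with h | h <;> omega

theorem age_eq_one_at_last_reset (h0 : 1 ≤ v 0)
    (hstep : ∀ t, v (t + 1) = 1 ∨ v (t + 1) = v t + 1) {t : ℕ} (ht : v t ≤ t) :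
    v (t + 1 - v t) = 1 := by
  induction t with
  | zero => have := one_le_age h0 hstep 0; omega
  | succ t ih =>
    rcases hstep t with h | h
    · rw [h, Nat.add_sub_cancel, h]
    · have := one_le_age h0 hstep t
      rw [show t + 1 + 1 - v (t + 1) = t + 1 - v t by omega]
      exact ih (by omega)

theorem card_filter_age_le_le_mul (h0 : 1 ≤ v 0)
    (hstep : ∀ t, v (t + 1) = 1 ∨ v (t + 1) = v t + 1) {T c : ℕ}
    (hc : #{r ∈ Ioo 0 T | v r = 1} < c) (s : ℕ) :
    #{t ∈ range T | v t ≤ s} ≤ c * s := by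
  calc #{t ∈ range T | v t ≤ s}
      ≤ #(insert 0 {r ∈ Ioo 0 T | v r = 1} ×ˢ range s) := by
        -- a slot is determined by the start of its block and its offset in the block
        refine card_le_card_of_injOn (fun t => (t + 1 - v t, t - (t + 1 - v t))) ?_ ?_
        · intro t ht
          simp only [mem_coe, mem_filter, mem_range] at ht
          have := one_le_age h0 hstep t
          simp only [coe_product, Set.mem_prod, mem_coe, mem_insert, mem_filter, mem_Ioo,
            mem_range]
          refine ⟨?_, by omega⟩
          by_cases hvt : v t ≤ t
          · exact Or.inr ⟨by omega, age_eq_one_at_last_reset h0 hstep hvt⟩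
          · exact Or.inl (by omega)
        · intro a _ b _ hab
          simp only [Prod.mk.injEq] at hab
          have := one_le_age h0 hstep a
          have := one_le_age h0 hstep b
          omega
    _ ≤ c * s := by
        rw [card_product, card_range]
        exact Nat.mul_le_mul_right s ((card_insert_le _ _).trans hc)

theorem mul_add_le_two_mul_sum_age (h0 : 1 ≤ v 0)
    (hstep : ∀ t, v (t + 1) = 1 ∨ v (t + 1) = v t + 1) {T c : ℕ}
    (hc : #{r ∈ Ioo 0 T | v r = 1} < c) :
    T * (T + c) ≤ 2 * c * ∑ t ∈ range T, v t := by
  refine (mul_add_le_two_mul_sum_range_sub T c (by omega)).trans (Nat.mul_le_mul_left _ ?_)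
  refine (sum_le_sum fun s _ => ?_).trans (sum_range_card_filter_lt_le_sum _ v _)
  have hsplit := card_filter_add_card_filter_not (s := range T) (fun t => v t ≤ s)
  simp only [not_le, card_range] at hsplit
  have := card_filter_age_le_le_mul h0 hstep hc s
  omega

end AgeSequence

theorem card_filter_Ioo_le_card_filter_succ (v : ℕ → ℕ) (T : ℕ) :
    #{r ∈ Ioo 0 T | v r = 1} ≤ #{t ∈ range T | t + 1 ≤ T - 1 ∧ v (t + 1) = 1} := by
  refine card_le_card_of_injOn (· - 1) (fun r hr => ?_) (fun a ha b hb hab => ?_)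
  · simp only [mem_coe, mem_filter, mem_Ioo, mem_range] at hr ⊢
    refine ⟨by omega, by omega, ?_⟩
    rw [Nat.sub_add_cancel hr.1.1]
    exact hr.2
  · simp only [mem_coe, mem_filter, mem_Ioo] at ha hb
    simp only at hab
    omega

theorem stmt_2_general (T₁ T₂ m : ℕ) (T : ℕ) (hT : T = (T₁ + 1) * m)
    (v : ℕ → ℕ) (h0 : 1 ≤ v 0)
    (hstep : ∀ t, v (t + 1) = 1 ∨ v (t + 1) = v t + 1)
    (hupd : ((Finset.range T).filter (fun t => t + 1 ≤ T - 1 ∧ v (t + 1) = 1)).card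
      ≤ T₁ + T₂) :
    (∑ t ∈ Finset.range T, (((t % m : ℕ) : ℝ) + 1)) / (∑ t ∈ Finset.range T, (v t : ℝ))
      ≤ ((1 + (T₁ : ℝ) + T) / (1 + (T₂ : ℝ) + T₁ + T)) * (1 + (T₂ : ℝ) / ((T₁ : ℝ) + 1)) := by
  have hage : T * (T + (T₁ + T₂ + 1)) ≤ 2 * (T₁ + T₂ + 1) * ∑ t ∈ range T, v t :=
    mul_add_le_two_mul_sum_age h0 hstep ((card_filter_Ioo_le_card_filter_succ v T).trans_lt (by omega))
  have hsaw : (∑ t ∈ range T, (t % m + 1)) * 2 = T * (m + 1) := by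
    rw [hT, sum_range_mod_add_one_mul_two]
  have hratio : (1 + (T₁ : ℝ) + T) / (1 + (T₂ : ℝ) + T₁ + T) * (1 + (T₂ : ℝ) / ((T₁ : ℝ) + 1))
      = (T₁ + T₂ + 1) * (m + 1) / (T₁ + T₂ + 1 + T) := by
    subst hT
    push_cast
    field_simp
    ring
  rw [hratio]
  refine div_le_of_le_mul₀ (by positivity) (by positivity) ?_
  rw [div_mul_eq_mul_div, le_div_iff₀ (by positivity)]
  have hsaw' : (∑ t ∈ range T, (((t % m : ℕ) : ℝ) + 1)) * 2 = T * (m + 1) := by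
    exact_mod_cast hsaw
  have hage' : (T : ℝ) * (T + (T₁ + T₂ + 1)) ≤ 2 * (T₁ + T₂ + 1) * ∑ t ∈ range T, (v t : ℝ) := by
    exact_mod_cast hage
  calc (∑ t ∈ range T, (((t % m : ℕ) : ℝ) + 1)) * (T₁ + T₂ + 1 + T)
      = (m + 1) / 2 * (T * (T + (T₁ + T₂ + 1))) := by
        linear_combination (T₁ + T₂ + 1 + T) / 2 * hsaw'
    _ ≤ (m + 1) / 2 * (2 * (T₁ + T₂ + 1) * ∑ t ∈ range T, (v t : ℝ)) := by gcongr
    _ = (T₁ + T₂ + 1) * (m + 1) * ∑ t ∈ range T, (v t : ℝ) := by ring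

/-- Theorem 1 of the paper: the sawtooth age sequence `w t = (t % m) + 1` of the
deterministic policy `π̂` (blocks of length `m = T/(T₁+1)`) against the worst adversary,
compared to any age sequence `v` with at most `T₁ + T₂` update slots, has ratio of
total ages at most `((1+T₁+T)/(1+T₂+T₁+T))·(1+T₂/(T₁+1))`. -/
theorem stmt_2 (T₁ T₂ m : ℕ) (hm : 1 ≤ m) (T : ℕ) (hT : T = (T₁ + 1) * m)
    (v : ℕ → ℕ) (h0 : 1 ≤ v 0)
    (hstep : ∀ t, v (t + 1) = 1 ∨ v (t + 1) = v t + 1)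
    (hupd : ((Finset.range T).filter (fun t => t + 1 ≤ T - 1 ∧ v (t + 1) = 1)).card
      ≤ T₁ + T₂) :
    (∑ t ∈ Finset.range T, (((t % m : ℕ) : ℝ) + 1)) / (∑ t ∈ Finset.range T, (v t : ℝ))
      ≤ ((1 + (T₁ : ℝ) + T) / (1 + (T₂ : ℝ) + T₁ + T)) * (1 + (T₂ : ℝ) / ((T₁ : ℝ) + 1)) :=
  stmt_2_general T₁ T₂ m T hT v h0 hstep hupd
end

section
/- Let v₀ ∈ ℝ and let f : ℕ → ℝ satisfy f(0) = v₀ and f(j) = f(j-1)/2 + (j+1)/2 for all j ≥ 1. Then for every n ≥ 1, ∑_{j=0}^{n-1} f(j) = 2·v₀·(1 - 1/2^n) + n(n-1)/2. -/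
/-! The recursion is solved by `f j = j + v₀ / 2 ^ j`, so the section sum splits into an
arithmetic sum `n (n - 1) / 2` and a geometric sum `2 v₀ (1 - 1 / 2 ^ n)`. -/

open Finset

section
variable {K : Type*} [Field K] [NeZero (2 : K)]

theorem sum_range_natCast (n : ℕ) : ∑ j ∈ range n, (j : K) = n * (n - 1) / 2 := by
  induction n with
  | zero => simp
  | succ n ih =>
    rw [sum_range_succ, ih]
    push_cast
    field_simp
    ring

theorem sum_range_div_two_pow (a : K) (n : ℕ) :
    ∑ j ∈ range n, a / 2 ^ j = 2 * a * (1 - 1 / 2 ^ n) := by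
  induction n with
  | zero => simp
  | succ n ih =>
    rw [sum_range_succ, ih]
    field_simp
    ring

theorem eq_natCast_add_div_two_pow {f : ℕ → K}
    (hrec : ∀ j, 1 ≤ j → f j = f (j - 1) / 2 + ((j : K) + 1) / 2) (j : ℕ) :
    f j = j + f 0 / 2 ^ j := by
  induction j with
  | zero => simp
  | succ k ih =>
    rw [hrec (k + 1) (Nat.le_add_left 1 k), Nat.add_sub_cancel, ih]
    push_cast
    field_simp
    ring

end

/-- Section sum (equation (27) of the paper) for the expected-age recursion
`f j = f (j-1)/2 + (j+1)/2` with `f 0 = v₀`: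
`∑_{j=0}^{n-1} f j = 2 v₀ (1 - 1/2^n) + n(n-1)/2`. -/
theorem stmt_7 (v₀ : ℝ) (f : ℕ → ℝ) (hf0 : f 0 = v₀)
    (hrec : ∀ j, 1 ≤ j → f j = f (j - 1) / 2 + ((j : ℝ) + 1) / 2) :
    ∀ n, 1 ≤ n →
      ∑ j ∈ Finset.range n, f j
        = 2 * v₀ * (1 - 1 / 2 ^ n) + (n : ℝ) * ((n : ℝ) - 1) / 2 := by
  intro n _
  rw [sum_congr rfl fun j _ => eq_natCast_add_div_two_pow hrec j, hf0, sum_add_distrib,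
    sum_range_natCast, sum_range_div_two_pow]
  ring
end

section
/- Let n ≥ 1 and m ≥ 1 be natural numbers. Define g : ℕ → ℝ by g(i) = (1/2^n)^{i-1} + n·∑_{ℓ=0}^{i-2} (1/2^n)^ℓ. Then 2(1 - 1/2^n)·∑_{i=1}^{m} g(i) + (g(m)/2^n + n) + m·n(n-1)/2 = m·n(n-1)/2 + 2nm + 2 - 1/2^{nm} + (n·2^n/(2^n - 1))·(1/2^{nm} - 1). -/
/-!
With `q = 1/2^n`, the closed form of `g` says `g 1 = 1` and `g (i+1) = q g i + n`: it is the
solution of an affine recurrence. Summing the recurrence telescopes, so that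
`(1 - q) ∑_{i=1}^m g i = g 1 - g (m+1) + n m`, and `q g m = g (m+1) - n`. Both sides of the
identity then reduce to `m n(n-1)/2 + 2nm + 2 - g (m+1)`, where
`g (m+1) = q^m + n (1 - q^m)/(1 - q)` is a geometric sum.
-/

open Finset

section AffineRecurrence

variable {R : Type*} [CommRing R]

theorem pow_add_mul_geom_sum_succ (q c : R) (j : ℕ) :
    q ^ (j + 1) + c * ∑ ℓ ∈ range (j + 1), q ^ ℓ
      = q * (q ^ j + c * ∑ ℓ ∈ range j, q ^ ℓ) + c := by
  rw [geom_sum_succ]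
  ring

theorem one_sub_mul_sum_Icc_of_affine_rec {g : ℕ → R} {q c : R}
    (hrec : ∀ i, 1 ≤ i → g (i + 1) = q * g i + c) (m : ℕ) :
    (1 - q) * ∑ i ∈ Icc 1 m, g i = g 1 - g (m + 1) + m * c := by
  induction m with
  | zero => simp
  | succ m ih =>
    rw [sum_Icc_succ_top (by omega), mul_add, ih, hrec (m + 1) (by omega)]
    push_cast
    ring

end AffineRecurrence

/-- Closed-form evaluation (equations (43)-(44) of the paper) of the total expected age
of one megasection for the optimal deterministic policy `π̌`: with `g i = E[v_{0,i}]`,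
`α = 2(1 - 1/2^n)`, `β = n(n-1)/2`, and `E[v_{x₂,x₃}] = g m / 2^n + n`,
`α ∑_{i=1}^m g i + (g m / 2^n + n) + m n(n-1)/2
  = m n(n-1)/2 + 2nm + 2 - 1/2^{nm} + (n 2^n/(2^n - 1))(1/2^{nm} - 1)`. -/
theorem stmt_9 (n m : ℕ) (hn : 1 ≤ n) (hm : 1 ≤ m) (g : ℕ → ℝ)
    (hg : ∀ i, g i = (1 / 2 ^ n : ℝ) ^ (i - 1)
        + n * ∑ ℓ ∈ Finset.range (i - 1), (1 / 2 ^ n : ℝ) ^ ℓ) :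
    2 * (1 - 1 / 2 ^ n) * ∑ i ∈ Finset.Icc 1 m, g i + (g m / 2 ^ n + n)
        + (m : ℝ) * ((n : ℝ) * ((n : ℝ) - 1)) / 2
      = (m : ℝ) * ((n : ℝ) * ((n : ℝ) - 1)) / 2 + 2 * n * m + 2 - 1 / 2 ^ (n * m)
        + ((n : ℝ) * 2 ^ n / (2 ^ n - 1)) * (1 / 2 ^ (n * m) - 1) := by
  have h_one_lt : (1 : ℝ) < 2 ^ n := one_lt_pow₀ one_lt_two (by omega)
  have hq : (1 / 2 ^ n : ℝ) ≠ 1 := by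
    rw [Ne, div_eq_one_iff_eq (by positivity)]
    exact h_one_lt.ne
  have hrec : ∀ i, 1 ≤ i → g (i + 1) = 1 / 2 ^ n * g i + n := by
    intro i hi
    obtain ⟨j, rfl⟩ := Nat.exists_eq_add_of_le' hi
    simpa only [hg, Nat.add_sub_cancel] using pow_add_mul_geom_sum_succ _ _ j
  have hsum := one_sub_mul_sum_Icc_of_affine_rec hrec m
  have hg_one : g 1 = 1 := by simp [hg]
  have hg_last := hrec m hm
  have hg_closed :
      g (m + 1) = (1 / 2 ^ n) ^ m + n * ((1 - (1 / 2 ^ n) ^ m) / (1 - 1 / 2 ^ n)) := by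
    rw [hg, Nat.add_sub_cancel, geom_sum_eq hq, ← neg_div_neg_eq ((1 / 2 ^ n : ℝ) ^ m - 1),
      neg_sub, neg_sub]
  have hpow : (1 : ℝ) / 2 ^ (n * m) = (1 / 2 ^ n) ^ m := by rw [pow_mul, one_div_pow]
  have hcoef : (n : ℝ) * 2 ^ n / (2 ^ n - 1) = n / (1 - 1 / 2 ^ n) := by
    have : (2 : ℝ) ^ n - 1 ≠ 0 := sub_ne_zero.mpr h_one_lt.ne'
    field_simp
  rw [hpow, hcoef]
  linear_combination 2 * hsum + 2 * hg_one - hg_last - hg_closed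
end

section
/- Let v₀ ∈ ℝ and n ≥ 1 a natural number, and define h(j) = (v₀ + j)/2^j + ∑_{k=0}^{j-1} (j-k)/2^{k+1} for j ≥ 0. Then ∑_{j=0}^{n-1} h(j) = 2·v₀·(1 - 1/2^n) + 4 - 2n/2^n - 4/2^n + n(n-3)/2. -/
lemma geom_half (n : ℕ) : ∑ k ∈ Finset.range n, (1:ℝ) / 2 ^ (k + 1) = 1 - 1 / 2 ^ n := by
  induction n with
  | zero => simp
  | succ n ih =>
    rw [Finset.sum_range_succ, ih]
    have h2 : (2:ℝ) ^ n ≠ 0 := by positivity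
    field_simp
    ring

lemma innerSumAux (n : ℕ) :
    ∑ k ∈ Finset.range n, ((n : ℝ) - k) / 2 ^ (k + 1) = (n : ℝ) - 1 + 1 / 2 ^ n := by
  induction n with
  | zero => simp
  | succ n ih =>
    rw [Finset.sum_range_succ]
    have hsplit : ∀ k ∈ Finset.range n,
        (((n + 1 : ℕ) : ℝ) - k) / 2 ^ (k + 1)
          = ((n : ℝ) - k) / 2 ^ (k + 1) + 1 / 2 ^ (k + 1) := by
      intro k _
      push_cast
      ring
    rw [Finset.sum_congr rfl hsplit, Finset.sum_add_distrib, ih, geom_half]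
    have h2 : (2:ℝ) ^ n ≠ 0 := by positivity
    push_cast
    field_simp
    ring

/-- Section sum (equations (54)-(57) of the paper) for the offline benchmark policy `π̌₁`:
with `h j = (v₀ + j)/2^j + ∑_{k=0}^{j-1} (j-k)/2^{k+1}`,
`∑_{j=0}^{n-1} h j = 2 v₀ (1 - 1/2^n) + 4 - 2n/2^n - 4/2^n + n(n-3)/2`. -/
theorem stmt_12 (v₀ : ℝ) (n : ℕ) (hn : 1 ≤ n) :
    ∑ j ∈ Finset.range n,
        ((v₀ + j) / 2 ^ j + ∑ k ∈ Finset.range j, ((j : ℝ) - k) / 2 ^ (k + 1))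
      = 2 * v₀ * (1 - 1 / 2 ^ n) + 4 - 2 * n / 2 ^ n - 4 / 2 ^ n
        + (n : ℝ) * ((n : ℝ) - 3) / 2 := by
  clear hn
  induction n with
  | zero => simp
  | succ n ih =>
    rw [Finset.sum_range_succ, ih, innerSumAux]
    have h2 : (2:ℝ) ^ n ≠ 0 := by positivity
    push_cast
    field_simp
    ring
end

section
/- Define F(x₂, x₃) = 2 - x₂/2 - 2/2^{x₂-x₃} - 2x₂/2^{x₃} + x₃/2^{x₂-x₃+1} - 2/2^{x₃} for natural numbers x₂, x₃. Then for all natural numbers x₂, x₃ with 1 ≤ x₃ ≤ x₂, F(x₂, x₃) < 0. In particular, F(x₂, x₂) = -(2x₂ + 2)/2^{x₂} < 0. -/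
/-- The expression of equation (20) of the paper for `E[A^{π̄,σ} - A^{π̃,σ}]`. -/
noncomputable def F (x₂ x₃ : ℕ) : ℝ :=
  2 - (x₂ : ℝ) / 2 - 2 / 2 ^ (x₂ - x₃) - 2 * (x₂ : ℝ) / 2 ^ x₃
    + (x₃ : ℝ) / 2 ^ (x₂ - x₃ + 1) - 2 / 2 ^ x₃

lemma F_key (x₃ d : ℕ) (h : 1 ≤ x₃) : F (x₃ + d) x₃ < 0 := by
  rcases le_or_gt 4 (x₃ + d) with hb | hb
  · -- large case
    set t : ℝ := 2 ^ d with ht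
    set s : ℝ := 2 ^ x₃ with hs
    have ht1 : (1:ℝ) ≤ t := one_le_pow₀ (by norm_num : (1:ℝ) ≤ 2)
    have hs2 : (2:ℝ) ≤ s := by
      calc (2:ℝ) = 2 ^ 1 := by norm_num
      _ ≤ 2 ^ x₃ := by exact pow_le_pow_right₀ (by norm_num) h
    have ht0 : (0:ℝ) < t := lt_of_lt_of_le one_pos ht1
    have hs0 : (0:ℝ) < s := lt_of_lt_of_le two_pos hs2
    have hX : (1:ℝ) ≤ (x₃:ℝ) := by exact_mod_cast h
    have hD : (0:ℝ) ≤ (d:ℝ) := Nat.cast_nonneg d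
    have hbig : (4:ℝ) ≤ (x₃:ℝ) + (d:ℝ) := by exact_mod_cast hb
    have hEq : F (x₃ + d) x₃ * (2 * t * s)
        = t * s * (4 - (x₃:ℝ) - d) + (x₃:ℝ) * s - 4 * s - 4 * t * ((x₃:ℝ) + d + 1) := by
      unfold F
      rw [Nat.add_sub_cancel_left, Nat.cast_add]
      field_simp [ht, hs]
      ring
    have hE : t * s * (4 - (x₃:ℝ) - d) + (x₃:ℝ) * s - 4 * s - 4 * t * ((x₃:ℝ) + d + 1) < 0 := by
      nlinarith [mul_nonneg (mul_nonneg (sub_nonneg.2 ht1) (le_of_lt hs0))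
        (by linarith : (0:ℝ) ≤ (x₃:ℝ) + d - 4),
        mul_pos ht0 (by linarith : (0:ℝ) < (x₃:ℝ) + d + 1),
        mul_nonneg hD (le_of_lt hs0)]
    have hpos : (0:ℝ) < 2 * t * s := by positivity
    nlinarith [hEq, hE, hpos]
  · -- small cases: x₃ + d ≤ 3, 1 ≤ x₃
    have hx3 : x₃ ≤ 3 := by omega
    have hd3 : d ≤ 2 := by omega
    interval_cases x₃ <;> interval_cases d <;> norm_num [F]

/-- Key step of Lemma 1: `F x₂ x₃ < 0` for `1 ≤ x₃ ≤ x₂`; in particular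
`F x₂ x₂ = -(2x₂ + 2)/2^{x₂} < 0`. -/
theorem stmt_14 :
    (∀ x₂ x₃ : ℕ, 1 ≤ x₃ → x₃ ≤ x₂ → F x₂ x₃ < 0) ∧
    (∀ x₂ : ℕ, F x₂ x₂ = -(2 * (x₂ : ℝ) + 2) / 2 ^ x₂ ∧ F x₂ x₂ < 0) := by
  constructor
  · intro x₂ x₃ h1 h2
    obtain ⟨d, rfl⟩ := Nat.exists_eq_add_of_le h2
    exact F_key x₃ d h1
  · intro x₂
    have hs0 : (0:ℝ) < 2 ^ x₂ := by positivity
    have hEq : F x₂ x₂ = -(2 * (x₂ : ℝ) + 2) / 2 ^ x₂ := by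
      unfold F
      rw [Nat.sub_self]
      field_simp
      ring
    refine ⟨hEq, ?_⟩
    rw [hEq]
    apply div_neg_of_neg_of_pos _ hs0
    have : (0:ℝ) ≤ (x₂:ℝ) := Nat.cast_nonneg x₂
    linarith
end

section
/- Define F(x₂, x₃) = 2 - x₂/2 - 2/2^{x₂-x₃} - 2x₂/2^{x₃} + x₃/2^{x₂-x₃+1} - 2/2^{x₃} for natural numbers x₂, x₃. Then F is increasing in its second argument on the relevant range: for all natural numbers x₂, x₃ with 1 ≤ x₃ < x₂, F(x₂, x₃) < F(x₂, x₃ + 1). -/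
lemma key (n : ℕ) (hn : 1 ≤ n) : -2 ≤ ((n : ℝ) - 2) * 2 ^ n := by
  rcases Nat.lt_or_ge n 2 with h | h
  · interval_cases n <;> norm_num
  · have h1 : (0:ℝ) ≤ (n : ℝ) - 2 := by
      have : (2:ℝ) ≤ (n:ℝ) := by exact_mod_cast h
      linarith
    have h2 : (0:ℝ) ≤ (2:ℝ) ^ n := by positivity
    nlinarith

/-- `F` is increasing in its second argument on the relevant range. -/
theorem stmt_15 (x₂ x₃ : ℕ) (h1 : 1 ≤ x₃) (h2 : x₃ < x₂) :
    F x₂ x₃ < F x₂ (x₃ + 1) := by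
  obtain ⟨e, he⟩ : ∃ e, x₂ = x₃ + e + 1 := ⟨x₂ - x₃ - 1, by omega⟩
  subst he
  unfold F
  have h3 : x₃ + e + 1 - x₃ = e + 1 := by omega
  have h4 : x₃ + e + 1 - (x₃ + 1) = e := by omega
  rw [h3, h4]
  have hA : (2:ℝ) ≤ 2 ^ x₃ := by
    calc (2:ℝ) = 2 ^ 1 := by norm_num
    _ ≤ 2 ^ x₃ := by exact pow_le_pow_right₀ (by norm_num) h1
  have hB : (1:ℝ) ≤ 2 ^ e := one_le_pow₀ (by norm_num)
  have hx : (1:ℝ) ≤ (x₃ : ℝ) := by exact_mod_cast h1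
  have hek : -2 ≤ ((x₃ : ℝ) - 2) * 2 ^ x₃ := key x₃ h1
  have hA0 : (0:ℝ) < 2 ^ x₃ := by positivity
  have hB0 : (0:ℝ) < 2 ^ e := by positivity
  have he0 : (0:ℝ) ≤ (e : ℝ) := by positivity
  push_cast
  rw [← sub_pos]
  have hs : ∀ n : ℕ, (2:ℝ) ^ (n + 1) = 2 * 2 ^ n := fun n => by rw [pow_succ]; ring
  have hnum : 0 < ((x₃:ℝ) - 2) * 2 ^ x₃ + ((x₃:ℝ) + (e:ℝ) + 2) * (2 ^ e * 4) := by
    nlinarith [hek, hB, hx, he0]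
  have expr :
      (2 - ((x₃:ℝ) + ↑e + 1) / 2 - 2 / 2 ^ e - 2 * ((x₃:ℝ) + ↑e + 1) / 2 ^ (x₃ + 1)
          + ((x₃:ℝ) + 1) / 2 ^ (e + 1) - 2 / 2 ^ (x₃ + 1))
        - (2 - ((x₃:ℝ) + ↑e + 1) / 2 - 2 / 2 ^ (e + 1) - 2 * ((x₃:ℝ) + ↑e + 1) / 2 ^ x₃
          + (x₃:ℝ) / 2 ^ (e + 1 + 1) - 2 / 2 ^ x₃)
      = (((x₃:ℝ) - 2) * 2 ^ x₃ + ((x₃:ℝ) + (e:ℝ) + 2) * (2 ^ e * 4)) / ((2 ^ e * 4) * 2 ^ x₃) := by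
    rw [hs, hs, hs, hs]
    field_simp
    ring
  rw [expr]
  exact div_pos hnum (by positivity)
end
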